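/- arXiv:2509.10130 — 6 statements merged into one kernel-verified Lean document; each statement's English description precedes it below -/
import Mathlib

section
/- For every integer n ≥ 2, the pair (X, Y) = (8n−7, 4) is the minimal positive solution of the Pell equation X² − (4n−3)(n−1)·Y² = 1; that is, (8n−7)² − (4n−3)(n−1)·16 = 1, and every pair of positive integers (X, Y) satisfying X² − (4n−3)(n−1)·Y² = 1 has Y ≥ 4 and X ≥ 8n−7. -/
lemma aux_sq_lt (a X : ℤ) (ha : 0 ≤ a) (hX : 0 < X) (h : a ^ 2 < X ^ 2) :
    a + 1 ≤ X := by
  by_contra hc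
  push_neg at hc
  have hXa : X ≤ a := by omega
  nlinarith

lemma aux_sq_le (a X : ℤ) (ha : 0 ≤ a) (hX : 0 < X) (h : a ^ 2 ≤ X ^ 2) :
    a ≤ X := by
  by_contra hc
  push_neg at hc
  nlinarith

theorem pell_minimal_solution (n : ℤ) (hn : 2 ≤ n) :
    (8 * n - 7) ^ 2 - (4 * n - 3) * (n - 1) * 4 ^ 2 = 1 ∧
    ∀ X Y : ℤ, 0 < X → 0 < Y →
      X ^ 2 - (4 * n - 3) * (n - 1) * Y ^ 2 = 1 → 4 ≤ Y ∧ 8 * n - 7 ≤ X := by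
  refine ⟨by ring, ?_⟩
  intro X Y hX hY h
  have hY4 : 4 ≤ Y := by
    by_contra hc
    push_neg at hc
    interval_cases Y
    · -- Y = 1
      have h1 : 2 * n - 1 ≤ X := by have := aux_sq_lt (2 * n - 2) X (by omega) hX (by nlinarith); omega
      nlinarith
    · -- Y = 2
      have h1 : 4 * n - 3 ≤ X := by have := aux_sq_lt (4 * n - 4) X (by omega) hX (by nlinarith); omega
      nlinarith
    · -- Y = 3
      have h1 : 6 * n - 5 ≤ X := by have := aux_sq_lt (6 * n - 6) X (by omega) hX (by nlinarith); omega
      nlinarith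
  refine ⟨hY4, ?_⟩
  have hd : 0 ≤ (4 * n - 3) * (n - 1) := by nlinarith
  exact aux_sq_le (8 * n - 7) X (by omega) hX (by nlinarith [mul_le_mul_of_nonneg_left (show (16:ℤ) ≤ Y ^ 2 by nlinarith) hd])
end

section
/- Let n and i be integers with i ≥ −1 and (i+1)(i+2) ≤ n. Equip ℤ² with the symmetric bilinear form B((x,y),(x',y')) = (2n−2)·x·x' + x·y' + x'·y − 2·y·y', and set v⁽ⁱ⁾ = (1, −(i+1)). Then there do not exist w₁, w₂ ∈ ℤ², both nonzero, such that w₁ + w₂ = v⁽ⁱ⁾ and, for j = 1, 2, both B(wⱼ, wⱼ) ≥ 0 and B(v⁽ⁱ⁾, wⱼ) > 0. -/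
/-- No positive class (w.r.t. v = (1,-(i+1))) can have nonpositive first coordinate
once n ≥ i² + 3i + 4. -/
lemma aux_no_nonpos (n i x y : ℤ) (hi : -1 ≤ i) (hn : i ^ 2 + 3 * i + 4 ≤ n)
    (hx : x ≤ 0)
    (hq : 0 ≤ (2 * n - 2) * x * x + x * y + x * y - 2 * y * y)
    (hp : 0 < (2 * n - i - 3) * x + (2 * i + 3) * y) : False := by
  rcases eq_or_lt_of_le hx with h0 | hneg
  · subst h0
    -- hq : 0 ≤ -2y² forces y = 0, contradicting hp
    have hy : y = 0 := by nlinarith [sq_nonneg y]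
    subst hy; simp at hp
  · obtain ⟨s, rfl⟩ : ∃ s, x = -s := ⟨-x, by ring⟩
    have hs1 : 1 ≤ s := by omega
    have hA : 0 < 2 * n - i - 3 := by nlinarith [sq_nonneg (i + 1)]
    have hK : 0 < 2 * i + 3 := by omega
    have hKy : (2 * n - i - 3) * s + 1 ≤ (2 * i + 3) * y := by
      nlinarith [hp]
    have hAs : 0 < (2 * n - i - 3) * s + 1 := by positivity
    have hsq : ((2 * n - i - 3) * s + 1) ^ 2 ≤ ((2 * i + 3) * y) ^ 2 := by
      have h0 : 0 ≤ (2 * n - i - 3) * s + 1 := le_of_lt hAs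
      nlinarith
    have hmul : 2 * s * (2 * i + 3) * ((2 * n - i - 3) * s + 1)
        ≤ 2 * s * (2 * i + 3) * ((2 * i + 3) * y) :=
      mul_le_mul_of_nonneg_left hKy (by positivity)
    have hC : 0 < 2 * (2 * n - i - 3) ^ 2 + 2 * (2 * i + 3) * (2 * n - i - 3)
        - (2 * n - 2) * (2 * i + 3) ^ 2 := by
      nlinarith [mul_nonneg (show (0:ℤ) ≤ n by nlinarith [sq_nonneg (i+1)])
        (show (0:ℤ) ≤ n - (i ^ 2 + 3 * i + 4) by linarith), sq_nonneg (i + 1)]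
    have hCs : 2 * (2 * n - i - 3) ^ 2 + 2 * (2 * i + 3) * (2 * n - i - 3)
        - (2 * n - 2) * (2 * i + 3) ^ 2
        ≤ (2 * (2 * n - i - 3) ^ 2 + 2 * (2 * i + 3) * (2 * n - i - 3)
        - (2 * n - 2) * (2 * i + 3) ^ 2) * (s * s) :=
      le_mul_of_one_le_right (le_of_lt hC) (by nlinarith)
    have hqK : 0 ≤ ((2 * n - 2) * (-s) * (-s) + (-s) * y + (-s) * y - 2 * y * y) * (2 * i + 3) ^ 2 :=
      mul_nonneg hq (by positivity)
    have hlin : 4 * (2 * n - i - 3) + 2 * (2 * i + 3)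
        ≤ (4 * (2 * n - i - 3) + 2 * (2 * i + 3)) * s :=
      le_mul_of_one_le_right (by positivity) hs1
    nlinarith [hqK, hsq, hmul, hCs, hC, hlin, hA, hK]

theorem no_sum_of_two_positive_classes (n i : ℤ) (hi : -1 ≤ i)
    (hni : (i + 1) * (i + 2) ≤ n) :
    let B : ℤ × ℤ → ℤ × ℤ → ℤ := fun w w' =>
      (2 * n - 2) * w.1 * w'.1 + w.1 * w'.2 + w'.1 * w.2 - 2 * w.2 * w'.2
    let v : ℤ × ℤ := (1, -(i + 1))
    ¬ ∃ w₁ w₂ : ℤ × ℤ, w₁ ≠ 0 ∧ w₂ ≠ 0 ∧ w₁ + w₂ = v ∧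
      0 ≤ B w₁ w₁ ∧ 0 < B v w₁ ∧ 0 ≤ B w₂ w₂ ∧ 0 < B v w₂ := by
  intro B v
  rintro ⟨w₁, w₂, h1, h2, hsum, q1, p1, q2, p2⟩
  obtain ⟨x₁, y₁⟩ := w₁
  obtain ⟨x₂, y₂⟩ := w₂
  have hx : x₁ + x₂ = 1 := congrArg Prod.fst hsum
  have hy : y₁ + y₂ = -(i + 1) := congrArg Prod.snd hsum
  simp only [B, v] at q1 p1 q2 p2
  -- B v wⱼ ≥ 1 each, and they sum to B v v = 2n - 2i² - 6i - 6, hence n ≥ i² + 3i + 4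
  have hn : i ^ 2 + 3 * i + 4 ≤ n := by nlinarith [p1, p2]
  -- one of x₁, x₂ is ≤ 0
  rcases le_or_gt x₁ 0 with hx1 | hx1
  · exact aux_no_nonpos n i x₁ y₁ hi hn hx1 (by linarith [q1]) (by nlinarith [p1])
  · have hx2 : x₂ ≤ 0 := by omega
    exact aux_no_nonpos n i x₂ y₂ hi hn hx2 (by linarith [q2]) (by nlinarith [p2])
end

section
/- Let n ≥ 2 and i ≥ −1 be integers with (i+1)(i+2) ≤ n. If x, y are integers satisfying (n−1)x² + xy − y² = −1 and 0 < (2n−i−3)x + (2i+3)y ≤ n − 1 − (i+1)(i+2), then (x, y) = (0, 1) or (x, y) = (1, −(i+2)). -/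
set_option maxHeartbeats 1000000


theorem spherical_classes_classification (n i : ℤ) (hn : 2 ≤ n) (hi : -1 ≤ i)
    (hni : (i + 1) * (i + 2) ≤ n) (x y : ℤ)
    (hsph : (n - 1) * x ^ 2 + x * y - y ^ 2 = -1)
    (hpos : 0 < (2 * n - i - 3) * x + (2 * i + 3) * y)
    (hle : (2 * n - i - 3) * x + (2 * i + 3) * y ≤ n - 1 - (i + 1) * (i + 2)) :
    (x = 0 ∧ y = 1) ∨ (x = 1 ∧ y = -(i + 2)) := by
  -- notation: q = n-1, j = i+1, m = (i+1)(i+2), c = 2i+3, B = 2n-i-3, r = n-1-m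
  have hj : 0 ≤ i + 1 := by omega
  have hq : 1 ≤ n - 1 := by omega
  -- since P is a positive integer, P ≥ 1, so m ≤ n - 2
  have hm_le : (i + 1) * (i + 2) ≤ n - 2 := by omega
  -- j ≤ n - 2 : since j^2 ≤ j(j+1) = m ≤ n-2 and j ≥ 0
  have hjq : i + 1 ≤ n - 2 := by nlinarith [sq_nonneg (i + 1), hm_le, hj]
  rcases lt_trichotomy x 0 with hx | hx | hx
  · -- x ≤ -1 : contradiction
    exfalso
    have hx1 : x ≤ -1 := by omega
    rcases le_or_gt y 0 with hy | hy
    · -- y ≤ 0 : P < 0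
      nlinarith [mul_nonneg (by omega : (0:ℤ) ≤ 2 * i + 3) (by omega : (0:ℤ) ≤ -y),
        mul_nonneg (by omega : (0:ℤ) ≤ 2 * n - i - 3) (by omega : (0:ℤ) ≤ -x)]
    · -- y ≥ 1 : c*y ≥ B*(-x) + 1
      have hy1 : 1 ≤ y := hy
      have hcy : (2 * i + 3) * y ≥ (2 * n - i - 3) * (-x) + 1 := by linarith
      have hBw : 0 < (2 * n - i - 3) * (-x) + 1 := by
        nlinarith [mul_nonneg (by omega : (0:ℤ) ≤ 2 * n - i - 3) (by omega : (0:ℤ) ≤ -x)]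
      -- squares
      have h1 : ((2 * i + 3) * y)^2 ≥ ((2 * n - i - 3) * (-x) + 1)^2 := by nlinarith
      have h2 : (2 * i + 3)^2 * (-x) * y ≥ (2 * i + 3) * (-x) * ((2 * n - i - 3) * (-x) + 1) := by
        nlinarith [mul_nonneg (mul_nonneg (by omega : (0:ℤ) ≤ 2 * i + 3) (by omega : (0:ℤ) ≤ -x))
          (by linarith : (0:ℤ) ≤ (2 * i + 3) * y - ((2 * n - i - 3) * (-x) + 1))]
      nlinarith [hsph, h1, h2, sq_nonneg x, mul_pos hBw hBw,
        mul_nonneg (mul_nonneg (by omega : (0:ℤ) ≤ 4 * (n-1) + 1) (by omega : (0:ℤ) ≤ n - 1 - (i+1)*(i+2) - 1)) (by nlinarith : (0:ℤ) ≤ x^2 - 1),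
        mul_nonneg (by omega : (0:ℤ) ≤ 4 * (n-1) + 1) (by nlinarith : (0:ℤ) ≤ x^2 - 1)]
  · -- x = 0
    subst hx
    have hy2 : y ^ 2 = 1 := by nlinarith
    have hypos : 0 < y := by
      by_contra h
      push_neg at h
      nlinarith [mul_nonneg (by omega : (0:ℤ) ≤ 2 * i + 3) (by omega : (0:ℤ) ≤ -y)]
    have hy3 : y ≤ 1 := by nlinarith [hy2, sq_nonneg (y - 1)]
    exact Or.inl ⟨rfl, by omega⟩
  · -- x ≥ 1
    have hx1 : 1 ≤ x := hx
    rcases le_or_gt 0 y with hy | hy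
    · -- y ≥ 0 : P ≥ B > r, contradiction
      exfalso
      nlinarith [mul_nonneg (by omega : (0:ℤ) ≤ 2 * n - i - 3) (by omega : (0:ℤ) ≤ x - 1),
        mul_nonneg (by omega : (0:ℤ) ≤ 2 * i + 3) hy,
        mul_nonneg hj (by omega : (0:ℤ) ≤ i + 2)]
    · -- y ≤ -1
      have hy1 : y ≤ -1 := by omega
      rcases (by omega : x = 1 ∨ 2 ≤ x) with hx2 | hx2
      · -- x = 1
        subst hx2
        have hy2 : y ^ 2 - y = n := by nlinarith
        have hub : y ≤ -i := by nlinarith [sq_nonneg (y + i)]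
        have hlb : -i - 2 ≤ y := by nlinarith [sq_nonneg (y + i + 2)]
        rcases (by omega : y = -i - 2 ∨ y = -i - 1 ∨ y = -i) with h | h | h
        · exact Or.inr ⟨rfl, by omega⟩
        · exfalso; subst h; nlinarith
        · exfalso; subst h; nlinarith
      · -- x ≥ 2 : contradiction
        exfalso
        have hcz : (2 * i + 3) * (-y) ≥ (2 * n - i - 3) * x - (n - 1 - (i+1)*(i+2)) := by
          linarith
        have hBr : 0 ≤ (2 * n - i - 3) * x - (n - 1 - (i+1)*(i+2)) := by
          nlinarith [mul_nonneg (by omega : (0:ℤ) ≤ 2 * n - i - 3) (by omega : (0:ℤ) ≤ x - 2),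
            mul_nonneg hj (by omega : (0:ℤ) ≤ i + 2)]
        have h1 : ((2 * i + 3) * (-y))^2 ≥ ((2 * n - i - 3) * x - (n - 1 - (i+1)*(i+2)))^2 := by
          nlinarith
        have h2 : (2 * i + 3)^2 * x * (-y) ≥
            (2 * i + 3) * x * ((2 * n - i - 3) * x - (n - 1 - (i+1)*(i+2))) := by
          nlinarith [mul_nonneg (mul_nonneg (by omega : (0:ℤ) ≤ 2 * i + 3) (by omega : (0:ℤ) ≤ x))
            (by linarith : (0:ℤ) ≤ (2 * i + 3) * (-y) - ((2 * n - i - 3) * x - (n - 1 - (i+1)*(i+2))))]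
        nlinarith [hsph, h1, h2,
          mul_nonneg (mul_nonneg (by omega : (0:ℤ) ≤ 4 * (n-1) + 1) (by omega : (0:ℤ) ≤ n - 1 - (i+1)*(i+2) - 1)) (by nlinarith : (0:ℤ) ≤ x^2 - x - 2),
          mul_nonneg (by omega : (0:ℤ) ≤ 4 * (n-1) + 1) (by nlinarith : (0:ℤ) ≤ x^2 - x - 2),
          sq_nonneg (n - 1 - (i+1)*(i+2))]
end

section
/- Let n ≥ 2 be an integer, t = 4n−3, and let x ≥ 3 and z ≥ 1 be integers with z² = t·x² + 4. Let Δ = √(t·(x−1)² + 4) (a positive real number). Then (t·x)/z − z + Δ < 1/z. -/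
theorem key_real_inequality (n : ℤ) (hn : 2 ≤ n) (x z : ℤ) (hx : 3 ≤ x)
    (hz : 1 ≤ z) (hzx : z ^ 2 = (4 * n - 3) * x ^ 2 + 4) :
    ((4 * n - 3 : ℤ) : ℝ) * (x : ℝ) / (z : ℝ) - (z : ℝ) +
      Real.sqrt (((4 * n - 3 : ℤ) : ℝ) * ((x : ℝ) - 1) ^ 2 + 4) < 1 / (z : ℝ) := by
  set t : ℝ := ((4 * n - 3 : ℤ) : ℝ) with ht
  have hzR : (0 : ℝ) < (z : ℝ) := by exact_mod_cast hz
  have hxR : (3 : ℝ) ≤ (x : ℝ) := by exact_mod_cast hx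
  have htR : (5 : ℝ) ≤ t := by
    rw [ht]; have : (5 : ℤ) ≤ 4 * n - 3 := by omega
    exact_mod_cast this
  have hzx' : ((z : ℝ)) ^ 2 = t * (x : ℝ) ^ 2 + 4 := by
    rw [ht]; exact_mod_cast hzx
  have hEpos : (0 : ℝ) < (t * (x : ℝ) ^ 2 - t * (x : ℝ) + 5) / (z : ℝ) := by
    apply div_pos _ hzR
    nlinarith
  have key : Real.sqrt (t * ((x : ℝ) - 1) ^ 2 + 4)
      < (t * (x : ℝ) ^ 2 - t * (x : ℝ) + 5) / (z : ℝ) := by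
    rw [show ((t * (x : ℝ) ^ 2 - t * (x : ℝ) + 5) / (z : ℝ))
        = Real.sqrt (((t * (x : ℝ) ^ 2 - t * (x : ℝ) + 5) / (z : ℝ)) ^ 2) from
        (Real.sqrt_sq hEpos.le).symm]
    apply Real.sqrt_lt_sqrt (by nlinarith)
    rw [div_pow, lt_div_iff₀ (by positivity)]
    nlinarith [hzx', mul_pos (show (0:ℝ) < t by linarith)
      (show (0:ℝ) < ((x:ℝ) - 2) * ((x:ℝ) + 1) by nlinarith)]
  have heq : t * (x : ℝ) / (z : ℝ) - (z : ℝ)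
      + (t * (x : ℝ) ^ 2 - t * (x : ℝ) + 5) / (z : ℝ) = 1 / (z : ℝ) := by
    field_simp
    nlinarith [hzx']
  linarith
end

section
/- Let i ≥ 0 be an integer. If x ≥ 1 and y are integers satisfying (2i+1)·y ≥ −i·x and (2i+3)·(y−1) ≤ −(i+1)·(x+2), then (x, y) = (2i+1, −i). -/
theorem triangle_lattice_point (i : ℤ) (hi : 0 ≤ i) (x y : ℤ) (hx : 1 ≤ x)
    (h1 : (2 * i + 1) * y ≥ -(i * x))
    (h2 : (2 * i + 3) * (y - 1) ≤ -((i + 1) * (x + 2))) :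
    x = 2 * i + 1 ∧ y = -i := by
  have hk : 0 ≤ (2 * i + 1) * y + i * x := by linarith
  have hm : 0 ≤ 1 - (i + 1) * x - (2 * i + 3) * y := by nlinarith
  have key : (2 * i + 3) * ((2 * i + 1) * y + i * x)
      + (2 * i + 1) * (1 - (i + 1) * x - (2 * i + 3) * y) = 2 * i + 1 - x := by ring
  have hk0 : (2 * i + 1) * y + i * x = 0 := by
    by_contra h
    have h1' : 1 ≤ (2 * i + 1) * y + i * x := lt_of_le_of_ne hk (Ne.symm h)
    nlinarith
  have hm0 : 1 - (i + 1) * x - (2 * i + 3) * y = 0 := by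
    by_contra h
    have h1' : 1 ≤ 1 - (i + 1) * x - (2 * i + 3) * y := lt_of_le_of_ne hm (Ne.symm h)
    nlinarith
  have hxv : x = 2 * i + 1 := by linear_combination (-(2*i+3))*hk0 + (-(2*i+1))*hm0 - key
  refine ⟨hxv, ?_⟩
  have hz : (2 * i + 1) * (y + i) = 0 := by linear_combination hk0 - i * hxv
  rcases mul_eq_zero.mp hz with h | h
  · omega
  · linarith
end

section
/- There do not exist integers i, k, r, x, y with i ≥ 0, 1 ≤ k ≤ 2, k < r < 2i+3, x ≥ 0, y ≥ 1, (2i+1)·(x−y) ≥ i·(r−k) and (2i+3)·x ≤ (i+1)·r. -/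
theorem no_destabilizing_data :
    ¬ ∃ i k r x y : ℤ, 0 ≤ i ∧ 1 ≤ k ∧ k ≤ 2 ∧ k < r ∧ r < 2 * i + 3 ∧
      0 ≤ x ∧ 1 ≤ y ∧ (2 * i + 1) * (x - y) ≥ i * (r - k) ∧
      (2 * i + 3) * x ≤ (i + 1) * r := by
  rintro ⟨i, k, r, x, y, hi, hk1, hk2, hkr, hr, hx, hy, h1, h2⟩
  have key : r ≥ (2 * i + 3) * ((2 * i + 1) * y - i * k) := by nlinarith [mul_le_mul_of_nonneg_left h2 (by linarith : (0:ℤ) ≤ 2 * i + 1), mul_le_mul_of_nonneg_left h1 (by linarith : (0:ℤ) ≤ 2 * i + 3)]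
  have h3 : (2 * i + 1) * y - i * k ≥ 1 := by nlinarith
  nlinarith
end
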